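/- arXiv:2104.08532 — 3 statements merged into one kernel-verified Lean document; each statement's English description precedes it below -/
import Mathlib

section
/- Let δ > 0 and let Ω ∈ ℝ satisfy the Roth-type bound: there exists C₀ > 0 such that |p/q − Ω| ≥ C₀/|q|^{2+δ} for all p ∈ ℤ and all q ∈ ℤ∖{0}. Then there exists a constant C > 0, independent of k and r, such that for all k ∈ ℤ and all r ∈ ℤ∖{0}: |k − r − rΩ| ≥ C·|k|/|r|^{2+δ}. -/
/-- If `Ω` satisfies a Roth-type bound with exponent `2 + δ`, then
`|k - r - r·Ω| ≥ C·|k| / |r|^(2+δ)` uniformly in `k ∈ ℤ`, `r ∈ ℤ \ {0}`. -/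
theorem stmt_0 (δ : ℝ) (hδ : 0 < δ) (Ω : ℝ)
    (hΩ : ∃ C₀ > (0 : ℝ), ∀ p q : ℤ, q ≠ 0 →
      C₀ / |(q : ℝ)| ^ ((2 : ℝ) + δ) ≤ |(p : ℝ) / (q : ℝ) - Ω|) :
    ∃ C > (0 : ℝ), ∀ k r : ℤ, r ≠ 0 →
      C * |(k : ℝ)| / |(r : ℝ)| ^ ((2 : ℝ) + δ) ≤ |(k : ℝ) - (r : ℝ) - (r : ℝ) * Ω| := by
  obtain ⟨C₀, hC₀, hR⟩ := hΩ
  set M : ℝ := 1 + |Ω| with hM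
  have hMpos : 0 < M := by positivity
  refine ⟨min (1/2) (C₀ / (2 * M)), lt_min (by norm_num) (by positivity), ?_⟩
  intro k r hr
  have hrpos : (0:ℝ) < |(r:ℝ)| := by
    exact abs_pos.mpr (by exact_mod_cast hr)
  have hr1 : (1:ℝ) ≤ |(r:ℝ)| := by
    have h : (1:ℤ) ≤ |r| := Int.one_le_abs hr
    exact_mod_cast h
  have hpow1 : (1:ℝ) ≤ |(r:ℝ)| ^ ((2:ℝ) + δ) :=
    Real.one_le_rpow hr1 (by linarith)
  have hpowpos : (0:ℝ) < |(r:ℝ)| ^ ((2:ℝ) + δ) := by linarith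
  by_cases hk : |(k:ℝ)| ≤ 2 * M * |(r:ℝ)|
  · -- use Roth bound with p = k - r, q = r
    have h1 := hR (k - r) r hr
    have hcast : ((k - r : ℤ) : ℝ) = (k:ℝ) - (r:ℝ) := by push_cast; ring
    rw [hcast] at h1
    have h2 : C₀ / |(r:ℝ)| ^ ((2:ℝ) + δ) * |(r:ℝ)| ≤
        |((k:ℝ) - (r:ℝ)) / (r:ℝ) - Ω| * |(r:ℝ)| :=
      mul_le_mul_of_nonneg_right h1 (le_of_lt hrpos)
    have h3 : |((k:ℝ) - (r:ℝ)) / (r:ℝ) - Ω| * |(r:ℝ)| = |(k:ℝ) - (r:ℝ) - (r:ℝ) * Ω| := by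
      rw [← abs_mul]
      congr 1
      field_simp
    rw [h3] at h2
    have hnum : min (1/2) (C₀ / (2 * M)) * |(k:ℝ)| ≤ C₀ * |(r:ℝ)| := by
      calc min (1/2) (C₀ / (2 * M)) * |(k:ℝ)|
          ≤ (C₀ / (2 * M)) * (2 * M * |(r:ℝ)|) := by
            apply mul_le_mul (min_le_right _ _) hk (abs_nonneg _)
            positivity
        _ = C₀ * |(r:ℝ)| := by field_simp
    calc min (1/2) (C₀ / (2 * M)) * |(k:ℝ)| / |(r:ℝ)| ^ ((2:ℝ) + δ)
        ≤ C₀ * |(r:ℝ)| / |(r:ℝ)| ^ ((2:ℝ) + δ) :=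
          div_le_div_of_nonneg_right hnum hpowpos.le |>.trans_eq rfl
      _ = C₀ / |(r:ℝ)| ^ ((2:ℝ) + δ) * |(r:ℝ)| := by ring
      _ ≤ _ := h2
  · push_neg at hk
    have hbig : |(k:ℝ)| / 2 ≤ |(k:ℝ) - (r:ℝ) - (r:ℝ) * Ω| := by
      have h4 : |(r:ℝ) + (r:ℝ) * Ω| ≤ M * |(r:ℝ)| := by
        calc |(r:ℝ) + (r:ℝ) * Ω| ≤ |(r:ℝ)| + |(r:ℝ) * Ω| := abs_add_le _ _
          _ = |(r:ℝ)| + |(r:ℝ)| * |Ω| := by rw [abs_mul]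
          _ = M * |(r:ℝ)| := by rw [hM]; ring
      have h5 : |(k:ℝ)| - |(r:ℝ) + (r:ℝ) * Ω| ≤ |(k:ℝ) - ((r:ℝ) + (r:ℝ) * Ω)| :=
        abs_sub_abs_le_abs_sub _ _
      have h6 : (k:ℝ) - ((r:ℝ) + (r:ℝ) * Ω) = (k:ℝ) - (r:ℝ) - (r:ℝ) * Ω := by ring
      rw [h6] at h5
      nlinarith
    calc min (1/2) (C₀ / (2 * M)) * |(k:ℝ)| / |(r:ℝ)| ^ ((2:ℝ) + δ)
        ≤ min (1/2) (C₀ / (2 * M)) * |(k:ℝ)| / 1 := by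
          apply div_le_div_of_nonneg_left _ one_pos hpow1
          · positivity
      _ ≤ |(k:ℝ)| / 2 := by
          rw [div_one]
          have : min (1/2) (C₀ / (2 * M)) ≤ 1/2 := min_le_left _ _
          nlinarith [abs_nonneg (k:ℝ)]
      _ ≤ _ := hbig
end

section
/- Let δ > 0 and let Ω ∈ ℝ satisfy the Roth-type bound: there exists C₀ > 0 such that |p/q − Ω| ≥ C₀/|q|^{2+δ} for all p ∈ ℤ and all q ∈ ℤ∖{0}. Fix real numbers ξ > 0 and α with ξ(1+δ) < α < 1. Then there exist ε₀ > 0 and C > 0 such that for all ε ∈ (0, ε₀), all s ∈ ℝ with |s| ≤ ε^α, all k ∈ ℤ, and all r ∈ ℤ∖{0} with |r| ≤ ε^{−ξ}, one has |s + k − r − rΩ| ≥ C·|s + k|/|r|^{2+δ}. -/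
/-- Roth-type bound for `Ω`, small/medium frequency version: for
`ξ > 0`, `ξ(1+δ) < α < 1`, there are `ε₀, C > 0` such that for `0 < ε < ε₀`,
`|s| ≤ ε^α`, `k ∈ ℤ` and `0 ≠ r ∈ ℤ` with `|r| ≤ ε^{-ξ}`,
`|s + k - r - rΩ| ≥ C·|s + k| / |r|^(2+δ)`. -/
theorem stmt_1 (δ : ℝ) (hδ : 0 < δ) (Ω : ℝ)
    (hΩ : ∃ C₀ > (0 : ℝ), ∀ p q : ℤ, q ≠ 0 →
      C₀ / |(q : ℝ)| ^ ((2 : ℝ) + δ) ≤ |(p : ℝ) / (q : ℝ) - Ω|)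
    (ξ α : ℝ) (hξ : 0 < ξ) (hξα : ξ * (1 + δ) < α) (hα : α < 1) :
    ∃ ε₀ > (0 : ℝ), ∃ C > (0 : ℝ), ∀ ε : ℝ, 0 < ε → ε < ε₀ →
      ∀ s : ℝ, |s| ≤ ε ^ α → ∀ k r : ℤ, r ≠ 0 → |(r : ℝ)| ≤ ε ^ (-ξ) →
        C * |s + (k : ℝ)| / |(r : ℝ)| ^ ((2 : ℝ) + δ) ≤
          |s + (k : ℝ) - (r : ℝ) - (r : ℝ) * Ω| := by
  obtain ⟨C₀, hC₀, hroth⟩ := hΩ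
  set A : ℝ := α - ξ * (1 + δ) with hA
  have hApos : 0 < A := by simp only [hA]; linarith
  have hΩ1 : (0:ℝ) < 1 + |Ω| := by positivity
  refine ⟨min 1 ((C₀/2) ^ (1/A : ℝ)), lt_min one_pos (Real.rpow_pos_of_pos (by linarith) _),
    min (1/2) (C₀/(4*(1+|Ω|))), lt_min (by norm_num) (by positivity), ?_⟩
  intro ε hε hεε₀ s hs k r hr hrε
  have hε1 : ε < 1 := lt_of_lt_of_le hεε₀ (min_le_left _ _)
  have hrne : ((r:ℝ)) ≠ 0 := Int.cast_ne_zero.mpr hr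
  have hr0 : (0:ℝ) < |(r:ℝ)| := abs_pos.mpr hrne
  have hr1 : (1:ℝ) ≤ |(r:ℝ)| := by
    have := Int.one_le_abs hr
    exact_mod_cast this
  -- Roth applied to p = k - r, q = r
  have hroth' := hroth (k - r) r hr
  have hmul : |((k - r : ℤ):ℝ)/(r:ℝ) - Ω| * |(r:ℝ)| = |(k:ℝ) - r - r*Ω| := by
    rw [← abs_mul]
    congr 1
    push_cast
    field_simp
  have hpow : |(r:ℝ)| ^ ((2:ℝ)+δ) = |(r:ℝ)| ^ ((1:ℝ)+δ) * |(r:ℝ)| := by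
    rw [show (2:ℝ)+δ = (1+δ)+1 by ring, Real.rpow_add hr0, Real.rpow_one]
  have hrpow_pos : (0:ℝ) < |(r:ℝ)| ^ ((1:ℝ)+δ) := Real.rpow_pos_of_pos hr0 _
  have hrpow2_pos : (0:ℝ) < |(r:ℝ)| ^ ((2:ℝ)+δ) := Real.rpow_pos_of_pos hr0 _
  have key : C₀ / |(r:ℝ)| ^ ((1:ℝ)+δ) ≤ |(k:ℝ) - r - r*Ω| := by
    have h := mul_le_mul_of_nonneg_right hroth' hr0.le
    rw [hmul] at h
    calc C₀ / |(r:ℝ)| ^ ((1:ℝ)+δ)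
        = C₀ / |(r:ℝ)| ^ ((2:ℝ)+δ) * |(r:ℝ)| := by
          rw [hpow]; field_simp
      _ ≤ _ := h
  -- smallness of ε^α
  have hεA : ε ^ A ≤ C₀ / 2 := by
    have h1 : ε ≤ (C₀/2) ^ (1/A : ℝ) := (lt_of_lt_of_le hεε₀ (min_le_right _ _)).le
    have h2 := Real.rpow_le_rpow hε.le h1 hApos.le
    rwa [← Real.rpow_mul (by linarith : (0:ℝ) ≤ C₀/2), one_div,
      inv_mul_cancel₀ hApos.ne', Real.rpow_one] at h2
  have hrξ : |(r:ℝ)| ^ ((1:ℝ)+δ) ≤ ε ^ (-(ξ * (1+δ))) := by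
    have := Real.rpow_le_rpow hr0.le hrε (by linarith : (0:ℝ) ≤ 1+δ)
    rwa [← Real.rpow_mul hε.le, neg_mul] at this
  have hεξ : ε ^ (ξ * (1+δ)) * |(r:ℝ)| ^ ((1:ℝ)+δ) ≤ 1 := by
    calc ε ^ (ξ * (1+δ)) * |(r:ℝ)| ^ ((1:ℝ)+δ)
        ≤ ε ^ (ξ * (1+δ)) * ε ^ (-(ξ * (1+δ))) := by
          exact mul_le_mul_of_nonneg_left hrξ (Real.rpow_pos_of_pos hε _).le
      _ = 1 := by rw [← Real.rpow_add hε]; simp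
  have hsmall : ε ^ α ≤ (C₀/2) / |(r:ℝ)| ^ ((1:ℝ)+δ) := by
    have heq : ε ^ α = ε ^ A * ε ^ (ξ * (1+δ)) := by
      rw [← Real.rpow_add hε]; congr 1; simp [hA]
    rw [heq, le_div_iff₀ hrpow_pos]
    calc ε ^ A * ε ^ (ξ * (1+δ)) * |(r:ℝ)| ^ ((1:ℝ)+δ)
        = ε ^ A * (ε ^ (ξ * (1+δ)) * |(r:ℝ)| ^ ((1:ℝ)+δ)) := by ring
      _ ≤ (C₀/2) * 1 := mul_le_mul hεA hεξ (by positivity) (by linarith)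
      _ = C₀/2 := by ring
  -- main lower bound
  have htri : |(k:ℝ) - r - r*Ω| ≤ |s + (k:ℝ) - r - r*Ω| + |s| := by
    have h := abs_sub (s + (k:ℝ) - r - r*Ω) s
    have e : (s + (k:ℝ) - r - r*Ω) - s = (k:ℝ) - r - r*Ω := by ring
    rw [e] at h
    exact h
  have main : C₀/2 / |(r:ℝ)| ^ ((1:ℝ)+δ) ≤ |s + (k:ℝ) - r - r*Ω| := by
    have : C₀ / |(r:ℝ)| ^ ((1:ℝ)+δ) - ε ^ α ≤ |s + (k:ℝ) - r - r*Ω| := by linarith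
    have h2 : C₀/2 / |(r:ℝ)| ^ ((1:ℝ)+δ) ≤ C₀ / |(r:ℝ)| ^ ((1:ℝ)+δ) - ε ^ α := by
      have : C₀ / |(r:ℝ)| ^ ((1:ℝ)+δ) = C₀/2 / |(r:ℝ)| ^ ((1:ℝ)+δ)
          + C₀/2 / |(r:ℝ)| ^ ((1:ℝ)+δ) := by ring
      linarith
    linarith
  rcases le_or_gt (|s + (k:ℝ)|) (2*(1+|Ω|)*|(r:ℝ)|) with hcase | hcase
  · -- small |s+k| case
    have hCle : min (1/2 : ℝ) (C₀/(4*(1+|Ω|))) ≤ C₀/(4*(1+|Ω|)) := min_le_right _ _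
    have hnum : min (1/2 : ℝ) (C₀/(4*(1+|Ω|))) * |s + (k:ℝ)| ≤ C₀/2 * |(r:ℝ)| := by
      calc min (1/2 : ℝ) (C₀/(4*(1+|Ω|))) * |s + (k:ℝ)|
          ≤ C₀/(4*(1+|Ω|)) * (2*(1+|Ω|)*|(r:ℝ)|) := by
            apply mul_le_mul hCle hcase (abs_nonneg _) (by positivity)
        _ = C₀/2 * |(r:ℝ)| := by field_simp; ring
    calc min (1/2 : ℝ) (C₀/(4*(1+|Ω|))) * |s + (k:ℝ)| / |(r:ℝ)| ^ ((2:ℝ)+δ)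
        ≤ C₀/2 * |(r:ℝ)| / |(r:ℝ)| ^ ((2:ℝ)+δ) := by
          exact div_le_div₀ (by positivity) hnum hrpow2_pos le_rfl
      _ = C₀/2 / |(r:ℝ)| ^ ((1:ℝ)+δ) := by rw [hpow]; field_simp
      _ ≤ _ := main
  · -- large |s+k| case
    have hrΩ : |(r:ℝ) + r*Ω| ≤ (1+|Ω|) * |(r:ℝ)| := by
      calc |(r:ℝ) + r*Ω| ≤ |(r:ℝ)| + |(r:ℝ)*Ω| := abs_add_le _ _
        _ = |(r:ℝ)| + |(r:ℝ)| * |Ω| := by rw [abs_mul]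
        _ = (1+|Ω|) * |(r:ℝ)| := by ring
    have h1 : |s + (k:ℝ)| - |(r:ℝ) + r*Ω| ≤ |s + (k:ℝ) - r - r*Ω| := by
      have h := abs_sub (s + (k:ℝ)) ((r:ℝ) + r*Ω)
      have h' := abs_sub_abs_le_abs_sub (s + (k:ℝ)) ((r:ℝ) + r*Ω)
      have e : s + (k:ℝ) - ((r:ℝ) + r*Ω) = s + (k:ℝ) - r - r*Ω := by ring
      rw [e] at h'
      exact h'
    have h2 : |s + (k:ℝ)| / 2 ≤ |s + (k:ℝ) - r - r*Ω| := by
      have : (1+|Ω|)*|(r:ℝ)| ≤ |s + (k:ℝ)| / 2 := by linarith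
      linarith
    have hone : (1:ℝ) ≤ |(r:ℝ)| ^ ((2:ℝ)+δ) := Real.one_le_rpow hr1 (by linarith)
    calc min (1/2 : ℝ) (C₀/(4*(1+|Ω|))) * |s + (k:ℝ)| / |(r:ℝ)| ^ ((2:ℝ)+δ)
        ≤ (1/2) * |s + (k:ℝ)| / 1 := by
          apply div_le_div₀ (by positivity)
            (mul_le_mul_of_nonneg_right (min_le_left _ _) (abs_nonneg _)) one_pos hone
      _ = |s + (k:ℝ)| / 2 := by ring
      _ ≤ _ := h2
end

section
/- Let d ≥ 2 and β ∈ ℝ^d∖{0}. For δ > 0 define the double cone Γ_δ(β) = {x ∈ ℝ^d∖{0} : ‖x/‖x‖ − β/‖β‖‖ ≤ δ or ‖x/‖x‖ + β/‖β‖‖ ≤ δ}. Then there is an absolute constant C (one may take C = √2) such that for every δ > 0, every real m ≥ 1, every real N₁ ≥ 1, and all x, y ∈ ℝ^d∖{0} satisfying x ∈ Γ_{δ/(N₁·m)}(β), y ∉ Γ_{δ/m}(β), and x − y ∈ ℝ·β, one has ‖y‖ ≤ (C/N₁)·‖x‖. -/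
open RealInnerProductSpace

/-- The conic `δ`-neighborhood `Γ_δ(β)` of the line spanned by `β`: the double cone
of nonzero `x` whose normalization is within `δ` of `±β/‖β‖`. -/
def doubleCone {d : ℕ} (δ : ℝ) (β : EuclideanSpace ℝ (Fin d)) :
    Set (EuclideanSpace ℝ (Fin d)) :=
  {x | x ≠ 0 ∧ (‖‖x‖⁻¹ • x - ‖β‖⁻¹ • β‖ ≤ δ ∨ ‖‖x‖⁻¹ • x + ‖β‖⁻¹ • β‖ ≤ δ)}

section aux
variable {E : Type*} [NormedAddCommGroup E] [InnerProductSpace ℝ E]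

/-- the orthogonal projection minimizes distance to the line -/
lemma aux_proj_le (b u : E) (hb : ‖b‖ = 1) (c : ℝ) :
    ‖u - ⟪u, b⟫ • b‖ ≤ ‖u - c • b‖ := by
  set w := u - ⟪u, b⟫ • b with hw
  have hwb : ⟪w, b⟫ = 0 := by
    simp [hw, inner_sub_left, real_inner_smul_left, real_inner_self_eq_norm_sq, hb]
  have hdec : u - c • b = w + (⟪u, b⟫ - c) • b := by
    rw [hw, sub_smul]; abel
  have h1 : ‖u - c • b‖ ^ 2 = ‖w‖ ^ 2 + ‖(⟪u, b⟫ - c) • b‖ ^ 2 := by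
    rw [hdec]
    rw [norm_add_sq_real]
    rw [real_inner_smul_right, hwb]
    ring
  nlinarith [norm_nonneg (u - c • b), norm_nonneg w, norm_nonneg ((⟪u, b⟫ - c) • b),
    sq_nonneg ‖(⟪u, b⟫ - c) • b‖]

end aux

set_option maxHeartbeats 800000 in
/-- There is an absolute constant `C > 0` (one may take `C = √2`)
such that for every `d ≥ 2`, `β ≠ 0`, `δ > 0`, `m ≥ 1`, `N₁ ≥ 1`, and nonzero
`x ∈ Γ_{δ/(N₁ m)}(β)`, `y ∉ Γ_{δ/m}(β)` with `x - y ∈ ℝ·β`, we have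
`‖y‖ ≤ (C/N₁)·‖x‖`. -/
theorem stmt_8 :
    ∃ C > (0 : ℝ), ∀ d : ℕ, 2 ≤ d → ∀ β : EuclideanSpace ℝ (Fin d), β ≠ 0 →
      ∀ δ : ℝ, 0 < δ → ∀ m N₁ : ℝ, 1 ≤ m → 1 ≤ N₁ →
        ∀ x y : EuclideanSpace ℝ (Fin d), x ≠ 0 → y ≠ 0 →
          x ∈ doubleCone (δ / (N₁ * m)) β → y ∉ doubleCone (δ / m) β →
          (∃ t : ℝ, x - y = t • β) → ‖y‖ ≤ (C / N₁) * ‖x‖ := by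
  refine ⟨Real.sqrt 2, by positivity, ?_⟩
  intro d hd β hβ δ hδ m N₁ hm hN₁ x y hx0 hy0 hx hy ⟨t, ht⟩
  have hβn : (0:ℝ) < ‖β‖ := norm_pos_iff.mpr hβ
  have hxn : (0:ℝ) < ‖x‖ := norm_pos_iff.mpr hx0
  have hyn : (0:ℝ) < ‖y‖ := norm_pos_iff.mpr hy0
  set b : EuclideanSpace ℝ (Fin d) := ‖β‖⁻¹ • β with hbdef
  have hb : ‖b‖ = 1 := by
    rw [hbdef, norm_smul, norm_inv, norm_norm, inv_mul_cancel₀ hβn.ne']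
  set u : EuclideanSpace ℝ (Fin d) := ‖x‖⁻¹ • x with hudef
  set v : EuclideanSpace ℝ (Fin d) := ‖y‖⁻¹ • y with hvdef
  -- x's perpendicular part is small
  have hxperp : ‖u - ⟪u, b⟫ • b‖ ≤ δ / (N₁ * m) := by
    rcases hx.2 with h | h
    · exact le_trans (by simpa using aux_proj_le b u hb 1) h
    · refine le_trans (aux_proj_le b u hb (-1)) ?_
      simpa [sub_neg_eq_add] using h
  -- y is far from both ±b
  have hv1 : δ / m < ‖v - b‖ ∧ δ / m < ‖v + b‖ := by
    by_contra hcon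
    push_neg at hcon
    apply hy
    refine ⟨hy0, ?_⟩
    rcases le_or_gt ‖v - b‖ (δ / m) with h | h
    · exact Or.inl h
    · exact Or.inr (hcon h)
  -- perpendicular parts of x and y agree
  have hβb : β = ‖β‖ • b := by
    rw [hbdef, smul_smul, mul_inv_cancel₀ hβn.ne', one_smul]
  have hperp_eq : y - ⟪y, b⟫ • b = x - ⟪x, b⟫ • b := by
    have hyx : y = x - (t * ‖β‖) • b := by
      have : x - y = (t * ‖β‖) • b := by rw [mul_smul, ← hβb]; exact ht
      rw [← this]; abel
    rw [hyx]
    rw [inner_sub_left, real_inner_smul_left, real_inner_self_eq_norm_sq, hb]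
    rw [sub_smul, smul_smul]
    module
  -- scaling
  have hscale_y : v - ⟪v, b⟫ • b = ‖y‖⁻¹ • (y - ⟪y, b⟫ • b) := by
    rw [hvdef, real_inner_smul_left, smul_sub, mul_smul]
  have hscale_x : u - ⟪u, b⟫ • b = ‖x‖⁻¹ • (x - ⟪x, b⟫ • b) := by
    rw [hudef, real_inner_smul_left, smul_sub, mul_smul]
  have hkey : ‖v - ⟪v, b⟫ • b‖ ≤ ‖y‖⁻¹ * ‖x‖ * (δ / (N₁ * m)) := by
    rw [hscale_y, hperp_eq, norm_smul, norm_inv, norm_norm]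
    have : ‖x - ⟪x, b⟫ • b‖ ≤ ‖x‖ * (δ / (N₁ * m)) := by
      have := hxperp
      rw [hscale_x, norm_smul, norm_inv, norm_norm] at this
      calc ‖x - ⟪x, b⟫ • b‖ = ‖x‖ * (‖x‖⁻¹ * ‖x - ⟪x, b⟫ • b‖) := by
            field_simp
        _ ≤ ‖x‖ * (δ / (N₁ * m)) := by
            exact mul_le_mul_of_nonneg_left this hxn.le
    calc ‖y‖⁻¹ * ‖x - ⟪x, b⟫ • b‖ ≤ ‖y‖⁻¹ * (‖x‖ * (δ / (N₁ * m))) :=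
          mul_le_mul_of_nonneg_left this (by positivity)
      _ = ‖y‖⁻¹ * ‖x‖ * (δ / (N₁ * m)) := by ring
  -- v far from ±b implies perpendicular part lower bound
  have hv : ‖v‖ = 1 := by
    rw [hvdef, norm_smul, norm_inv, norm_norm, inv_mul_cancel₀ hyn.ne']
  set c : ℝ := ⟪v, b⟫ with hcdef
  have hc : |c| ≤ 1 := by
    have := abs_real_inner_le_norm v b
    rwa [hv, hb, one_mul] at this
  have hvm : ‖v - b‖ ^ 2 = 2 - 2 * c := by
    rw [norm_sub_sq_real, hv, hb]; ring
  have hvp : ‖v + b‖ ^ 2 = 2 + 2 * c := by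
    rw [norm_add_sq_real, hv, hb]; ring
  have hvperp : ‖v - c • b‖ ^ 2 = 1 - c ^ 2 := by
    rw [norm_sub_sq_real, hv, real_inner_smul_right, ← hcdef, norm_smul, hb,
      Real.norm_eq_abs, mul_one, one_pow, sq_abs]
    ring
  have hdm : (0:ℝ) < δ / m := by positivity
  have hlow : (δ / m) ^ 2 < 2 * ‖v - c • b‖ ^ 2 := by
    rw [hvperp]
    rcases abs_le.mp hc with ⟨h1, h2⟩
    rcases le_or_gt 0 c with h | h
    · have h3 : (δ / m) ^ 2 < ‖v - b‖ ^ 2 := pow_lt_pow_left₀ hv1.1 hdm.le (by norm_num)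
      rw [hvm] at h3
      nlinarith
    · have h3 : (δ / m) ^ 2 < ‖v + b‖ ^ 2 := pow_lt_pow_left₀ hv1.2 hdm.le (by norm_num)
      rw [hvp] at h3
      nlinarith
  have hlt : δ / m < Real.sqrt 2 * ‖v - c • b‖ := by
    have h2 : (Real.sqrt 2 * ‖v - c • b‖) ^ 2 = 2 * ‖v - c • b‖ ^ 2 := by
      rw [mul_pow, Real.sq_sqrt (by norm_num : (2:ℝ) ≥ 0)]
    nlinarith [hdm, mul_nonneg (Real.sqrt_nonneg 2) (norm_nonneg (v - c • b))]
  -- combine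
  have hfinal : δ / m < Real.sqrt 2 * (‖y‖⁻¹ * ‖x‖ * (δ / (N₁ * m))) := by
    calc δ / m < Real.sqrt 2 * ‖v - c • b‖ := hlt
      _ ≤ Real.sqrt 2 * (‖y‖⁻¹ * ‖x‖ * (δ / (N₁ * m))) :=
          mul_le_mul_of_nonneg_left hkey (Real.sqrt_nonneg 2)
  have hm0 : (0:ℝ) < m := lt_of_lt_of_le one_pos hm
  have hN0 : (0:ℝ) < N₁ := lt_of_lt_of_le one_pos hN₁
  rw [div_mul_eq_mul_div, le_div_iff₀ hN0]
  have := hfinal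
  rw [div_lt_iff₀ hm0] at this
  -- δ < √2 * (‖y‖⁻¹‖x‖ δ/(N₁ m)) * m
  have h2 : δ * N₁ * ‖y‖ < Real.sqrt 2 * ‖x‖ * δ := by
    have hexp : Real.sqrt 2 * (‖y‖⁻¹ * ‖x‖ * (δ / (N₁ * m))) * m
        = Real.sqrt 2 * ‖x‖ * δ / (N₁ * ‖y‖) := by
      field_simp
    rw [hexp] at this
    rw [lt_div_iff₀ (by positivity)] at this
    nlinarith
  nlinarith
end
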